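/- Identifiability of the probability of sufficiency in the chain CBN U → X → Y with binary variables: in any causal model i-compatible with this CBN, Pr(X=0 ∧ Y=0 ∧ [X←1](Y=1)) = a·b·d·(1−e) + (1−a)·c·d·(1−e), where a = P(U=0), b = P(X=0|U=0), c = P(X=0|U=1), d = P(Y=0|X=0), e = P(Y=0|X=1). -/

import Mathlib

/-- A functional causal model: `F X e s` gives the value of the endogenous
variable `X` given the context `e` (values of the exogenous variables) and
the values `s` of the other endogenous variables. -/
structure CM (E V α : Type) where
  F : V → E → (V → α) → α

/-- `s` is a solution of all the structural equations of `M` in context `e`. -/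
def Solves {E V α : Type} (M : CM E V α) (e : E) (s : V → α) : Prop :=
  ∀ X, s X = M.F X e s

/-- `M` is recursive (acyclic): there is a strict total order `r` on the
endogenous variables such that if `r X Y` then the equation for `X`
does not depend on the value of `Y`. -/
def Recursive {E V α : Type} (M : CM E V α) : Prop :=
  ∃ r : V → V → Prop, IsStrictTotalOrder V r ∧
    ∀ X Y, r X Y → ∀ e s s', (∀ Z, Z ≠ Y → s Z = s' Z) → M.F X e s = M.F X e s'

/-- Intervention: replace the equation of every variable `X` with `I X = some x`
by the constant equation `X = x`. -/
def intervene {E V α : Type} (M : CM E V α) (I : V → Option α) : CM E V α :=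
  ⟨fun X e s => (I X).getD (M.F X e s)⟩

/-- Causal formulas: primitive events `X = x`, Boolean combinations, and
intervention formulas `[I]φ`. -/
inductive Formula (V α : Type) where
  | eq  : V → α → Formula V α
  | neg : Formula V α → Formula V α
  | and : Formula V α → Formula V α → Formula V α
  | or  : Formula V α → Formula V α → Formula V α
  | int : (V → Option α) → Formula V α → Formula V α

/-- Satisfaction of a formula in a causal setting `(M, e)`: primitive events
hold in the (unique, for recursive models) solution, and `[I]φ` holds iff
`φ` holds in the intervened model. -/
def Sat {E V α : Type} : CM E V α → E → Formula V α → Prop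
  | M, e, .eq X x => ∀ s, Solves M e s → s X = x
  | M, e, .neg φ => ¬ Sat M e φ
  | M, e, .and φ ψ => Sat M e φ ∧ Sat M e ψ
  | M, e, .or φ ψ => Sat M e φ ∨ Sat M e ψ
  | M, e, .int I φ => Sat (intervene M I) e φ

/-- The single intervention `Y ← y`. -/
def single {V α : Type} [DecidableEq V] (Y : V) (y : α) : V → Option α :=
  fun Z => if Z = Y then some y else none

/-- The probability of a set of contexts under the distribution `p`. -/
noncomputable def PrOf {E : Type} [Fintype E] (p : E → ℝ) (S : Set E) : ℝ :=
  ∑ e, S.indicator p e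

/-- The probability of a formula: the probability of the set of contexts in
which it holds. -/
noncomputable def prF {E V α : Type} [Fintype E] (p : E → ℝ) (M : CM E V α)
    (φ : Formula V α) : ℝ :=
  PrOf p {e | Sat M e φ}

/-- Mutual independence of a family of families of events: for every finite
collection of indices and every choice of one event per index, the probability
of the intersection is the product of the probabilities. -/
def MutIndep {E : Type} [Fintype E] {ι : Type} {κ : ι → Type} (p : E → ℝ)
    (ev : (i : ι) → κ i → Set E) : Prop :=
  ∀ (s : Finset ι) (f : (i : ι) → κ i),
    PrOf p (⋂ i ∈ s, ev i (f i)) = ∏ i ∈ s, PrOf p (ev i (f i))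

/-- The three variables of the CBN: `vU` (the root), `vX`, `vY`. -/
inductive V3 : Type where
  | vU | vX | vY
deriving DecidableEq

instance instFintypeV3 : Fintype V3 :=
  ⟨{V3.vU, V3.vX, V3.vY}, fun x => by cases x <;> decide⟩

open V3

/-- The conditional events of the chain CBN `U → X → Y`, as events of a
compatible causal model: the value of `U`; the value of `X` given `U = 0`,
resp. `U = 1`; and the value of `Y` given `X = 0`, resp. `X = 1`
(conditional events are interpreted as intervention formulas). -/
def ev15 {E : Type} (M : CM E V3 Bool) : Fin 5 → Bool → Set E
  | ⟨0, _⟩ => fun v => {e | Sat M e (.eq vU v)}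
  | ⟨1, _⟩ => fun v => {e | Sat M e (.int (single vU false) (.eq vX v))}
  | ⟨2, _⟩ => fun v => {e | Sat M e (.int (single vU true) (.eq vX v))}
  | ⟨3, _⟩ => fun v => {e | Sat M e (.int (single vX false) (.eq vY v))}
  | ⟨4, _⟩ => fun v => {e | Sat M e (.int (single vX true) (.eq vY v))}

/-!
In a chain model the structural equations have a unique solution, read off from the response
functions `u(e)`, `x_u(e) = F_X(e, U := u)`, `y_x(e) = F_Y(e, X := x)`. Hence
`X = 0 ∧ Y = 0 ∧ [X ← 1](Y = 1)` holds in `e` iff, for `u = u(e)`, `x_u(e) = 0`, `y_0(e) = 0` and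
`y_1(e) = 1`. Splitting on `u` writes the event as a disjoint union of two intersections of cpt
events, each of which factorises by mutual independence.
-/

section Probability

variable {E : Type} [Fintype E] (p : E → ℝ)

theorem PrOf_union_of_disjoint {S T : Set E} (h : Disjoint S T) :
    PrOf p (S ∪ T) = PrOf p S + PrOf p T := by
  simp only [PrOf, Set.indicator_union_of_disjoint h, Finset.sum_add_distrib]

theorem PrOf_compl (hp1 : ∑ e, p e = 1) (S : Set E) : PrOf p Sᶜ = 1 - PrOf p S := by
  have h : PrOf p S + PrOf p Sᶜ = ∑ e, p e := by
    simp only [PrOf, ← Finset.sum_add_distrib, Set.indicator_self_add_compl_apply]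
  linarith

theorem MutIndep.PrOf_inter₄ {ι α : Type} [DecidableEq ι] {ev : ι → α → Set E}
    (h : MutIndep p ev) {i j k l : ι} (hd : [i, j, k, l].Nodup) (f : ι → α) :
    PrOf p (ev i (f i) ∩ ev j (f j) ∩ ev k (f k) ∩ ev l (f l)) =
      PrOf p (ev i (f i)) * PrOf p (ev j (f j)) * PrOf p (ev k (f k)) * PrOf p (ev l (f l)) := by
  simp only [List.nodup_cons, List.mem_cons, List.not_mem_nil, or_false, not_or] at hd
  have := h {i, j, k, l} f
  rw [Finset.prod_insert (by simp [hd.1]), Finset.prod_insert (by simp [hd.2.1]),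
    Finset.prod_insert (by simp [hd.2.2.1]), Finset.prod_singleton] at this
  simpa only [Finset.set_biInter_insert, Finset.set_biInter_singleton, Set.inter_assoc,
    mul_assoc] using this

end Probability

namespace CM

variable {E : Type}

def respU (M : CM E V3 Bool) (e : E) : Bool := M.F vU e fun _ => false

def respX (M : CM E V3 Bool) (u : Bool) (e : E) : Bool := M.F vX e fun _ => u

def respY (M : CM E V3 Bool) (x : Bool) (e : E) : Bool := M.F vY e fun _ => x

def chainSolution (M : CM E V3 Bool) (e : E) : V3 → Bool
  | vU => M.respU e
  | vX => M.respX (M.respU e) e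
  | vY => M.respY (M.respX (M.respU e) e) e

@[simp]
theorem chainSolution_intervene_vU (M : CM E V3 Bool) (u : Bool) (e : E) :
    (intervene M (single vU u)).chainSolution e vX = M.respX u e :=
  rfl

@[simp]
theorem chainSolution_intervene_vX (M : CM E V3 Bool) (x : Bool) (e : E) :
    (intervene M (single vX x)).chainSolution e vY = M.respY x e :=
  rfl

structure IsChain (M : CM E V3 Bool) : Prop where
  F_vU_const : ∀ e s s', M.F vU e s = M.F vU e s'
  F_vX_congr : ∀ e s s', s vU = s' vU → M.F vX e s = M.F vX e s'
  F_vY_congr : ∀ e s s', s vX = s' vX → M.F vY e s = M.F vY e s'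

namespace IsChain

variable {M : CM E V3 Bool}

theorem intervene (hM : M.IsChain) (I : V3 → Option Bool) : (_root_.intervene M I).IsChain where
  F_vU_const e s s' := congrArg (I vU).getD (hM.F_vU_const e s s')
  F_vX_congr e s s' h := congrArg (I vX).getD (hM.F_vX_congr e s s' h)
  F_vY_congr e s s' h := congrArg (I vY).getD (hM.F_vY_congr e s s' h)

theorem solves_iff (hM : M.IsChain) (e : E) (s : V3 → Bool) :
    Solves M e s ↔ s = M.chainSolution e := by
  constructor
  · intro hs
    have hu : s vU = M.respU e := (hs vU).trans (hM.F_vU_const e _ _)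
    have hx : s vX = M.respX (M.respU e) e := (hs vX).trans (hM.F_vX_congr e _ _ hu)
    have hy : s vY = M.respY (M.respX (M.respU e) e) e := (hs vY).trans (hM.F_vY_congr e _ _ hx)
    funext v
    cases v
    exacts [hu, hx, hy]
  · rintro rfl v
    cases v
    exacts [hM.F_vU_const e _ _, hM.F_vX_congr e _ _ rfl, hM.F_vY_congr e _ _ rfl]

theorem sat_eq_iff (hM : M.IsChain) (e : E) (v : V3) (b : Bool) :
    Sat M e (.eq v b) ↔ M.chainSolution e v = b := by
  simp only [Sat, hM.solves_iff, forall_eq]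

theorem ev15_true_eq_compl (hM : M.IsChain) (i : Fin 5) :
    ev15 M i true = (ev15 M i false)ᶜ := by
  ext e
  fin_cases i <;> simp [ev15, Sat.eq_5, (hM.intervene _).sat_eq_iff, hM.sat_eq_iff]

theorem setOf_sufficiency_eq (hM : M.IsChain) :
    {e | Sat M e (.and (.eq vX false) (.and (.eq vY false)
        (.int (single vX true) (.eq vY true))))} =
      (ev15 M 0 false ∩ ev15 M 1 false ∩ ev15 M 3 false ∩ ev15 M 4 true) ∪
        (ev15 M 0 true ∩ ev15 M 2 false ∩ ev15 M 3 false ∩ ev15 M 4 true) := by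
  ext e
  simp only [ev15, Sat.eq_3, Sat.eq_5, Set.mem_ofPred_eq, Set.mem_union, Set.mem_inter_iff,
    hM.sat_eq_iff, (hM.intervene _).sat_eq_iff, chainSolution_intervene_vU,
    chainSolution_intervene_vX]
  simp only [chainSolution]
  cases M.respU e <;> cases M.respX false e <;> cases M.respX true e <;> simp

end IsChain

end CM

theorem stmt15_general {E : Type} [Fintype E] (M : CM E V3 Bool)
    (hFU : ∀ e s s', M.F vU e s = M.F vU e s')
    (hFX : ∀ e s s', s vU = s' vU → M.F vX e s = M.F vX e s')
    (hFY : ∀ e s s', s vX = s' vX → M.F vY e s = M.F vY e s')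
    (p : E → ℝ) (hp1 : ∑ e, p e = 1)
    (a b c d ep : ℝ)
    (ha : PrOf p (ev15 M 0 false) = a) (hb : PrOf p (ev15 M 1 false) = b)
    (hc : PrOf p (ev15 M 2 false) = c) (hd : PrOf p (ev15 M 3 false) = d)
    (he : PrOf p (ev15 M 4 false) = ep)
    (hind : MutIndep p (ev15 M)) :
    PrOf p {e | Sat M e (.and (.eq vX false) (.and (.eq vY false)
        (.int (single vX true) (.eq vY true))))} =
      a * b * d * (1 - ep) + (1 - a) * c * d * (1 - ep) := by
  have hM : M.IsChain := ⟨hFU, hFX, hFY⟩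
  have hU : PrOf p (ev15 M 0 true) = 1 - a := by rw [hM.ev15_true_eq_compl, PrOf_compl p hp1, ha]
  have hY : PrOf p (ev15 M 4 true) = 1 - ep := by rw [hM.ev15_true_eq_compl, PrOf_compl p hp1, he]
  have hdisj : Disjoint (ev15 M 0 false ∩ ev15 M 1 false ∩ ev15 M 3 false ∩ ev15 M 4 true)
      (ev15 M 0 true ∩ ev15 M 2 false ∩ ev15 M 3 false ∩ ev15 M 4 true) := by
    rw [hM.ev15_true_eq_compl 0]
    exact disjoint_compl_right.mono (fun _ h => h.1.1.1) (fun _ h => h.1.1.1)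
  have hbranch₀ : PrOf p (ev15 M 0 false ∩ ev15 M 1 false ∩ ev15 M 3 false ∩ ev15 M 4 true) =
      a * b * d * (1 - ep) := by
    rw [← ha, ← hb, ← hd, ← hY]
    exact hind.PrOf_inter₄ p (by decide) ![false, false, false, false, true]
  have hbranch₁ : PrOf p (ev15 M 0 true ∩ ev15 M 2 false ∩ ev15 M 3 false ∩ ev15 M 4 true) =
      (1 - a) * c * d * (1 - ep) := by
    rw [← hU, ← hc, ← hd, ← hY]
    exact hind.PrOf_inter₄ p (by decide) ![true, false, false, false, true]
  rw [hM.setOf_sufficiency_eq, PrOf_union_of_disjoint p hdisj, hbranch₀, hbranch₁]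

/-- identifiability of the probability of sufficiency in the
chain CBN `U → X → Y` with binary variables: in any causal model i-compatible
with this CBN (the cpt entries are reproduced as the probabilities of the
corresponding intervention-formula events, and these events are mutually
independent), `Pr(X=0 ∧ Y=0 ∧ [X←1](Y=1)) = a·b·d·(1−ep) + (1−a)·c·d·(1−ep)`,
where `a = P(U=0)`, `b = P(X=0|U=0)`, `c = P(X=0|U=1)`, `d = P(Y=0|X=0)`,
`ep = P(Y=0|X=1)`.  (`false` is the value 0, `true` is the value 1.) -/
theorem stmt15 {E : Type} [Fintype E] (M : CM E V3 Bool) (hrec : Recursive M)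
    (hFU : ∀ e s s', M.F vU e s = M.F vU e s')
    (hFX : ∀ e s s', s vU = s' vU → M.F vX e s = M.F vX e s')
    (hFY : ∀ e s s', s vX = s' vX → M.F vY e s = M.F vY e s')
    (p : E → ℝ) (hp0 : ∀ e, 0 ≤ p e) (hp1 : ∑ e, p e = 1)
    (a b c d ep : ℝ)
    (ha : PrOf p (ev15 M 0 false) = a) (hb : PrOf p (ev15 M 1 false) = b)
    (hc : PrOf p (ev15 M 2 false) = c) (hd : PrOf p (ev15 M 3 false) = d)
    (he : PrOf p (ev15 M 4 false) = ep)
    (hind : MutIndep p (ev15 M)) :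
    PrOf p {e | Sat M e (.and (.eq vX false) (.and (.eq vY false)
        (.int (single vX true) (.eq vY true))))} =
      a * b * d * (1 - ep) + (1 - a) * c * d * (1 - ep) :=
  stmt15_general M hFU hFX hFY p hp1 a b c d ep ha hb hc hd he hind
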